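/- arXiv:2510.20384 — 3 statements merged into one kernel-verified Lean document; each statement's English description precedes it below -/
import Mathlib

section
/- Let P(s) = (1/(s+1))I + (b/(s+2))J with J = [[1,1],[-1,-1]], and let U = diag((b-4)/(b+4), 1) with b > 4. Then det(I + U·P(s)) has a zero s₀ with nonnegative real part; i.e., the perturbed closed-loop system is unstable. -/
open Matrix

/-- For P(s) = (1/(s+1))I + (b/(s+2))J and U = diag((b-4)/(b+4), 1) with b > 4,
det(I + U·P(s)) has a zero s₀ with nonnegative real part: the perturbed
closed-loop system is unstable. -/
theorem stmt8 (b : ℝ) (hb : 4 < b) :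
    ∃ s₀ : ℂ, s₀ ≠ -1 ∧ s₀ ≠ -2 ∧ 0 ≤ s₀.re ∧
      ((1 : Matrix (Fin 2) (Fin 2) ℂ) +
        !![((b-4)/(b+4) : ℂ), 0; 0, 1] *
        !![1/(s₀+1) + (b : ℂ)/(s₀+2), (b : ℂ)/(s₀+2);
           -((b : ℂ)/(s₀+2)),         1/(s₀+1) - (b : ℂ)/(s₀+2)]).det = 0 := by
  refine ⟨0, by norm_num, by norm_num, le_refl _, ?_⟩
  have hb4 : ((b : ℂ) + 4) ≠ 0 := by
    have h : ((b:ℝ) + 4) ≠ 0 := by linarith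
    exact_mod_cast Complex.ofReal_ne_zero.mpr h
  have h1 : ((1:ℂ) + 1) ≠ 0 := by norm_num
  simp only [Matrix.det_fin_two, Matrix.one_fin_two]
  simp [Matrix.mul_fin_two, Matrix.add_apply, Matrix.of_apply]
  field_simp
  ring
end

section
/- If M₁ and M₂ are complex square matrices with M₁ + M₁* ≥ 0 and M₂ + M₂* > 0, then I + M₁M₂ is invertible. -/
open Matrix
open scoped ComplexOrder

/-! A kernel vector `x ≠ 0` of `1 + M₁ * M₂` gives `y = M₂ x` with `M₁ y = -x`, so
`Re ⟪y, M₁ y⟫ = -Re ⟪y, x⟫ = -Re ⟪x, M₂ x⟫`. The Hermitian part of `M₁` makes the left side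
nonnegative and that of `M₂` makes the right side negative. -/

namespace Matrix

variable {ι 𝕜 : Type*} [Fintype ι] [RCLike 𝕜]

theorem star_dotProduct_conjTranspose_mulVec (M : Matrix ι ι 𝕜) (x : ι → 𝕜) :
    star x ⬝ᵥ (Mᴴ *ᵥ x) = star (star x ⬝ᵥ (M *ᵥ x)) := by
  rw [mulVec_conjTranspose, dotProduct_star, star_star, dotProduct_mulVec]

theorem re_star_dotProduct_add_conjTranspose_mulVec (M : Matrix ι ι 𝕜) (x : ι → 𝕜) :
    RCLike.re (star x ⬝ᵥ ((M + Mᴴ) *ᵥ x)) = 2 * RCLike.re (star x ⬝ᵥ (M *ᵥ x)) := by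
  rw [add_mulVec, dotProduct_add, star_dotProduct_conjTranspose_mulVec, map_add,
    RCLike.star_def, RCLike.conj_re, two_mul]

theorem re_star_dotProduct_mulVec_nonneg_of_posSemidef_add_conjTranspose {M : Matrix ι ι 𝕜}
    (hM : (M + Mᴴ).PosSemidef) (x : ι → 𝕜) : 0 ≤ RCLike.re (star x ⬝ᵥ (M *ᵥ x)) := by
  have h := (RCLike.nonneg_iff.mp (hM.dotProduct_mulVec_nonneg x)).1
  rw [re_star_dotProduct_add_conjTranspose_mulVec] at h
  linarith

theorem re_star_dotProduct_mulVec_pos_of_posDef_add_conjTranspose {M : Matrix ι ι 𝕜}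
    (hM : (M + Mᴴ).PosDef) {x : ι → 𝕜} (hx : x ≠ 0) : 0 < RCLike.re (star x ⬝ᵥ (M *ᵥ x)) := by
  have h := (RCLike.pos_iff.mp (hM.dotProduct_mulVec_pos hx)).1
  rw [re_star_dotProduct_add_conjTranspose_mulVec] at h
  linarith

theorem isUnit_one_add_mul_of_posSemidef_add_conjTranspose_of_posDef_add_conjTranspose
    [DecidableEq ι] {M₁ M₂ : Matrix ι ι 𝕜} (h₁ : (M₁ + M₁ᴴ).PosSemidef) (h₂ : (M₂ + M₂ᴴ).PosDef) :
    IsUnit (1 + M₁ * M₂) := by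
  rw [isUnit_iff_isUnit_det, isUnit_iff_ne_zero]
  intro hdet
  obtain ⟨x, hx, hker⟩ := exists_mulVec_eq_zero_iff.mpr hdet
  set y := M₂ *ᵥ x
  have hM₁y : M₁ *ᵥ y = -x := by
    rw [add_mulVec, one_mulVec, ← mulVec_mulVec] at hker
    exact eq_neg_of_add_eq_zero_right hker
  have hre : RCLike.re (star y ⬝ᵥ (M₁ *ᵥ y)) = -RCLike.re (star x ⬝ᵥ (M₂ *ᵥ x)) := by
    rw [hM₁y, dotProduct_neg, star_dotProduct, map_neg, RCLike.star_def, RCLike.conj_re]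
  have hy_nonneg := re_star_dotProduct_mulVec_nonneg_of_posSemidef_add_conjTranspose h₁ y
  have hx_pos := re_star_dotProduct_mulVec_pos_of_posDef_add_conjTranspose h₂ hx
  linarith

end Matrix

/-- Passivity theorem, pointwise-in-frequency step: if M₁ + M₁* ≥ 0 and
M₂ + M₂* > 0, then I + M₁M₂ is invertible. -/
theorem stmt18 {n : ℕ} (M₁ M₂ : Matrix (Fin n) (Fin n) ℂ)
    (h₁ : (M₁ + M₁ᴴ).PosSemidef) (h₂ : (M₂ + M₂ᴴ).PosDef) :
    IsUnit ((1 : Matrix (Fin n) (Fin n) ℂ) + M₁ * M₂) :=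
  isUnit_one_add_mul_of_posSemidef_add_conjTranspose_of_posDef_add_conjTranspose h₁ h₂
end

section
/- Mixed small-gain/passivity pointwise lemma: let M₁, M₂ be complex square matrices such that either (M₁ + M₁* > 0 and M₂ + M₂* > 0) or (‖M₁‖ < 1 and ‖M₂‖ < 1). Then I + M₁M₂ is invertible. -/
/-!
In the passive case, a kernel vector `x` of `1 + M₁ M₂` gives `y = M₂ x` with `M₁ y = -x`, so the
Hermitian forms of `M₂ + M₂ᴴ` at `x` and of `M₁ + M₁ᴴ` at `y` are `2 Re ⟪x, y⟫` and `-2 Re ⟪x, y⟫`,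
which cannot both be positive. In the small-gain case `‖M₁ M₂‖ < 1`, and the Neumann series
inverts `1 + M₁ M₂`.
-/

open Matrix
open scoped ComplexOrder
open scoped Matrix.Norms.L2Operator

theorem isUnit_one_add_mul_of_norm_lt_one {R : Type*} [NormedRing R] [HasSummableGeomSeries R]
    {a b : R} (ha : ‖a‖ < 1) (hb : ‖b‖ ≤ 1) : IsUnit (1 + a * b) := by
  have hab : ‖-(a * b)‖ < 1 := by
    rw [norm_neg]
    exact (norm_mul_le a b).trans_lt
      (mul_lt_one_of_nonneg_of_lt_one_left (norm_nonneg a) ha hb)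
  simpa using (Units.oneSub _ hab).isUnit

namespace Matrix

variable {ι R : Type*} [Fintype ι]

theorem star_dotProduct_add_conjTranspose_mulVec [CommRing R] [StarRing R]
    (M : Matrix ι ι R) (x : ι → R) :
    star x ⬝ᵥ ((M + Mᴴ) *ᵥ x) = star x ⬝ᵥ (M *ᵥ x) + star (star x ⬝ᵥ (M *ᵥ x)) := by
  rw [add_mulVec, dotProduct_add, mulVec_conjTranspose, dotProduct_star, star_star,
    ← dotProduct_mulVec]

theorem eq_zero_of_add_mulVec_mulVec_eq_zero [CommRing R] [PartialOrder R] [StarRing R]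
    [IsOrderedAddMonoid R] {A B : Matrix ι ι R} (hA : (A + Aᴴ).PosDef) (hB : (B + Bᴴ).PosDef)
    {x : ι → R} (hx : x + A *ᵥ B *ᵥ x = 0) : x = 0 := by
  by_contra hx0
  set y := B *ᵥ x
  have hAy : A *ᵥ y = -x := eq_neg_of_add_eq_zero_right hx
  have hy0 : y ≠ 0 := fun hy ↦ hx0 (by rw [← neg_neg x, ← hAy, hy, mulVec_zero, neg_zero])
  set c := star x ⬝ᵥ y
  have hposB : 0 < c + star c := by
    simpa only [star_dotProduct_add_conjTranspose_mulVec] using hB.dotProduct_mulVec_pos hx0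
  have hposA : 0 < -(c + star c) := by
    have hyx : star y ⬝ᵥ (A *ᵥ y) = -star c := by
      rw [hAy, dotProduct_neg, star_dotProduct]
    have := hA.dotProduct_mulVec_pos hy0
    rwa [star_dotProduct_add_conjTranspose_mulVec, hyx, star_neg, star_star, ← neg_add_rev] at this
  exact lt_asymm hposB (neg_pos.mp hposA)

theorem isUnit_one_add_mul_of_posDef_add_conjTranspose [DecidableEq ι] [Field R] [PartialOrder R]
    [StarRing R] [IsOrderedAddMonoid R] {A B : Matrix ι ι R} (hA : (A + Aᴴ).PosDef)
    (hB : (B + Bᴴ).PosDef) : IsUnit (1 + A * B) := by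
  rw [isUnit_iff_isUnit_det, isUnit_iff_ne_zero]
  intro hdet
  obtain ⟨x, hx0, hx⟩ := exists_mulVec_eq_zero_iff.mpr hdet
  rw [add_mulVec, one_mulVec, ← mulVec_mulVec] at hx
  exact hx0 (eq_zero_of_add_mulVec_mulVec_eq_zero hA hB hx)

end Matrix

/-- Mixed small-gain/passivity pointwise lemma: if either both M₁, M₂ have
positive definite Hermitian part, or both have operator norm less than 1,
then I + M₁M₂ is invertible. -/
theorem stmt19 {n : ℕ} (M₁ M₂ : Matrix (Fin n) (Fin n) ℂ)
    (h : ((M₁ + M₁ᴴ).PosDef ∧ (M₂ + M₂ᴴ).PosDef) ∨ (‖M₁‖ < 1 ∧ ‖M₂‖ < 1)) :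
    IsUnit ((1 : Matrix (Fin n) (Fin n) ℂ) + M₁ * M₂) := by
  rcases h with ⟨h₁, h₂⟩ | ⟨h₁, h₂⟩
  · exact isUnit_one_add_mul_of_posDef_add_conjTranspose h₁ h₂
  · exact isUnit_one_add_mul_of_norm_lt_one h₁ h₂.le
end
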